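/- Let 𝓕 be an admissible space of analytic functions from U to W with base point z ∈ U. Suppose there is no bounded linear operator P : Z^(2) → Z^(1) with P ∘ ι_{1,2} = id_{Z^(1)} (i.e., the exact sequence 0 → Z^(1) → Z^(2) → Z^(1) → 0 is nontrivial). Then for all integers n, k ≥ 1 there is no bounded linear operator P : Z^(n+k) → Z^(n) with P ∘ ι_{n,n+k} = id_{Z^(n)} (i.e., the exact sequence 0 → Z^(n) → Z^(n+k) → Z^(k) → 0 is nontrivial). -/

import Mathlib

open Metric Filter

noncomputable section

/-- `ψ` is a conformal equivalence from `U` onto the open unit disc. -/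
def IsConfEquiv (U : Set ℂ) (ψ : ℂ → ℂ) : Prop :=
  ∃ ψi : ℂ → ℂ,
    AnalyticOnNhd ℂ ψ U ∧ Set.MapsTo ψ U (Metric.ball (0 : ℂ) 1) ∧
    AnalyticOnNhd ℂ ψi (Metric.ball (0 : ℂ) 1) ∧ Set.MapsTo ψi (Metric.ball (0 : ℂ) 1) U ∧
    (∀ w ∈ U, ψi (ψ w) = w) ∧ (∀ w ∈ Metric.ball (0 : ℂ) 1, ψ (ψi w) = w)

/-- An admissible space of analytic functions from `U` to `W`, in the sense of
Kalton and Montgomery-Smith: a Banach space `𝓕` of `W`-valued analytic functions on `U`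
(realized through an injective linear map `toFun`) such that evaluations are bounded and
multiplication by a conformal equivalence `ψ : U → 𝔻` is an isometry of `𝓕`. -/
structure AdmissibleSpace (U : Set ℂ) (W : Type*) [NormedAddCommGroup W] [NormedSpace ℂ W]
    [CompleteSpace W] (𝓕 : Type*) [NormedAddCommGroup 𝓕] [NormedSpace ℂ 𝓕]
    [CompleteSpace 𝓕] where
  isOpen_U : IsOpen U
  nonempty_U : U.Nonempty
  conf : ∃ ψ, IsConfEquiv U ψ
  toFun : 𝓕 →ₗ[ℂ] ℂ → W
  analyticOn : ∀ F : 𝓕, AnalyticOnNhd ℂ (toFun F) U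
  ext_on : ∀ F G : 𝓕, (∀ w ∈ U, toFun F w = toFun G w) → F = G
  eval_bound : ∀ w ∈ U, ∃ C : ℝ, ∀ F : 𝓕, ‖toFun F w‖ ≤ C * ‖F‖
  smul_mem : ∀ ψ, IsConfEquiv U ψ → ∀ F : 𝓕,
      ∃ G : 𝓕, (∀ w ∈ U, toFun G w = ψ w • toFun F w) ∧ ‖G‖ = ‖F‖
  mem_of_smul : ∀ ψ, IsConfEquiv U ψ → ∀ F : 𝓕, ∀ g : ℂ → W, AnalyticOnNhd ℂ g U →
      (∀ w ∈ U, toFun F w = ψ w • g w) →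
      ∃ G : 𝓕, (∀ w ∈ U, toFun G w = g w) ∧ ‖G‖ = ‖F‖

variable {U : Set ℂ} {W : Type*} [NormedAddCommGroup W] [NormedSpace ℂ W] [CompleteSpace W]
  {𝓕 : Type*} [NormedAddCommGroup 𝓕] [NormedSpace ℂ 𝓕] [CompleteSpace 𝓕]

/-- The `i`-th Taylor coefficient `F̂[i] = F^{(i)}(z)/i!` of (the function represented by)
`F ∈ 𝓕` at the base point `z`. -/
def taylorCoeff (A : AdmissibleSpace U W 𝓕) (z : ℂ) (i : ℕ) (F : 𝓕) : W :=
  ((Nat.factorial i : ℂ))⁻¹ • iteratedDeriv i (A.toFun F) z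

/-- The derived space `Z^(n)`, realized as the set of `n`-tuples of Taylor coefficients
(at the base point `z`) of functions of `𝓕`; the tuple `x` records the `i`-th Taylor
coefficient in position `i`. -/
def Zset (A : AdmissibleSpace U W 𝓕) (z : ℂ) (n : ℕ) : Set (Fin n → W) :=
  {x | ∃ F : 𝓕, ∀ i : Fin n, taylorCoeff A z i F = x i}

/-- The (quotient) norm of the derived space `Z^(n)`. -/
def Znorm (A : AdmissibleSpace U W 𝓕) (z : ℂ) (n : ℕ) (x : Fin n → W) : ℝ :=
  sInf {c : ℝ | ∃ F : 𝓕, (∀ i : Fin n, taylorCoeff A z i F = x i) ∧ ‖F‖ = c}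

/-- The "inclusion on the left" `ι_{n,m}`: in terms of Taylor indices, it shifts a tuple
up by `m - n`, filling with zeros: `(ι x)_i = x_{i-(m-n)}` for `i ≥ m - n`, `0` otherwise. -/
def leftShift (W : Type*) [NormedAddCommGroup W] (n m : ℕ) (x : Fin n → W) : Fin m → W :=
  fun i => if h : m - n ≤ (i : ℕ) ∧ (i : ℕ) - (m - n) < n
    then x ⟨(i : ℕ) - (m - n), h.2⟩ else 0

/-- The "projection on the right" `π_{m,k}`: in terms of Taylor indices, it keeps the
coefficients of index `< k`. -/
def rightProj (W : Type*) [NormedAddCommGroup W] (m k : ℕ) (h : k ≤ m) (x : Fin m → W) :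
    Fin k → W :=
  fun i => x (Fin.castLE h i)

/-- `P` is a bounded linear projection (retraction) witnessing that the exact sequence
`0 → Z^(n) → Z^(n+k) → Z^(k) → 0` is trivial: `P` is a bounded linear operator
`Z^(n+k) → Z^(n)` with `P ∘ ι_{n,n+k} = id` on `Z^(n)`. -/
def AdmissibleSpace.IsSplittingProjection (A : AdmissibleSpace U W 𝓕) (z : ℂ) (n k : ℕ)
    (P : (Fin (n + k) → W) → Fin n → W) : Prop :=
  (∀ x ∈ Zset A z (n + k), P x ∈ Zset A z n) ∧
  (∀ x ∈ Zset A z (n + k), ∀ y ∈ Zset A z (n + k), P (x + y) = P x + P y) ∧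
  (∀ (c : ℂ), ∀ x ∈ Zset A z (n + k), P (c • x) = c • P x) ∧
  (∃ C : ℝ, ∀ x ∈ Zset A z (n + k), Znorm A z n (P x) ≤ C * Znorm A z (n + k) x) ∧
  (∀ x ∈ Zset A z n, P (leftShift W n (n + k) x) = x)

/-!
A bounded splitting `P : Z^(n+k) → Z^(n)` of `ι_{n,n+k}` can be moved in two directions.
Precomposed with `ι_{n+j,n+k}` it splits `ι_{n,n+j}` for every `j ≤ k`. For `m ≤ n`, taking the
first `m` coefficients of `P x`, where `x ∈ Z^(n+k)` is any lift of `v ∈ Z^(m+k)`, splits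
`ι_{m,m+k}`: two lifts differ by some `ι_{n,n+k} e`, which `P` maps to `e`, and the first `m`
coefficients of `e` vanish. With `m = j = 1` a splitting for `(n, k)` yields one for `(1, 1)`.

The analytic input is that `ι` is bounded and that dividing by `w - z` preserves `𝓕` up to
coefficients of high order. Both follow from a conformal equivalence `φ` with `φ z = 0` (a Möbius
normalization of the given one): multiplication by `φ` is an isometry, division by `φ` stays in
`𝓕`, and any function analytic on `U` is a polynomial in `φ` modulo `φ^m`.
-/

open Topology ComplexConjugate

section TaylorCoeffAt

variable {E : Type*} [NormedAddCommGroup E] [NormedSpace ℂ E] {z : ℂ} {f g : ℂ → E}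

/-- `taylorCoeff A z i F` unfolds to `taylorCoeffAt z i (A.toFun F)`; the `rfl`s below use this. -/
def taylorCoeffAt (z : ℂ) (i : ℕ) (f : ℂ → E) : E :=
  ((Nat.factorial i : ℂ))⁻¹ • iteratedDeriv i f z

theorem taylorCoeffAt_zero (z : ℂ) (f : ℂ → E) : taylorCoeffAt z 0 f = f z := by
  simp [taylorCoeffAt]

theorem Filter.EventuallyEq.taylorCoeffAt_eq (h : f =ᶠ[𝓝 z] g) (i : ℕ) :
    taylorCoeffAt z i f = taylorCoeffAt z i g := by
  rw [taylorCoeffAt, taylorCoeffAt, h.iteratedDeriv_eq]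

theorem taylorCoeffAt_smul (c : ℂ) (f : ℂ → E) (i : ℕ) :
    taylorCoeffAt z i (c • f) = c • taylorCoeffAt z i f := by
  rw [taylorCoeffAt, taylorCoeffAt, iteratedDeriv_const_smul_field, smul_comm]

theorem AnalyticAt.taylorCoeffAt_add [CompleteSpace E] (hf : AnalyticAt ℂ f z)
    (hg : AnalyticAt ℂ g z) (i : ℕ) :
    taylorCoeffAt z i (f + g) = taylorCoeffAt z i f + taylorCoeffAt z i g := by
  rw [taylorCoeffAt, iteratedDeriv_add hf.contDiffAt hg.contDiffAt, smul_add]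
  rfl

theorem HasFPowerSeriesAt.taylorCoeffAt_eq [CompleteSpace E]
    {p : FormalMultilinearSeries ℂ ℂ E} (hp : HasFPowerSeriesAt f p z) (i : ℕ) :
    taylorCoeffAt z i f = p.coeff i := by
  obtain ⟨r, hr⟩ := hp
  rw [taylorCoeffAt, iteratedDeriv_eq_iteratedFDeriv, ← hr.factorial_smul 1 i,
    ← Nat.cast_smul_eq_nsmul ℂ, inv_smul_smul₀ (by exact_mod_cast i.factorial_ne_zero)]
  rfl

theorem dslope_sub_smul_of_differentiableAt (hg : DifferentiableAt ℂ g z) :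
    dslope (fun w => (w - z) • g w) z = g := by
  classical
  rw [dslope_sub_smul, Function.update_eq_self_iff]
  simpa using (((hasDerivAt_id z).sub_const z).fun_smul hg.hasDerivAt).deriv

theorem AnalyticAt.taylorCoeffAt_sub_smul_succ [CompleteSpace E] (hg : AnalyticAt ℂ g z)
    (i : ℕ) : taylorCoeffAt z (i + 1) (fun w => (w - z) • g w) = taylorCoeffAt z i g := by
  obtain ⟨p, hp⟩ : AnalyticAt ℂ (fun w => (w - z) • g w) z := by fun_prop
  have hq := hp.has_fpower_series_dslope_fslope
  rw [dslope_sub_smul_of_differentiableAt hg.differentiableAt] at hq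
  rw [hp.taylorCoeffAt_eq, hq.taylorCoeffAt_eq, FormalMultilinearSeries.coeff_fslope]

theorem AnalyticAt.taylorCoeffAt_pow_sub_smul_add [CompleteSpace E] (hg : AnalyticAt ℂ g z)
    (j i : ℕ) : taylorCoeffAt z (i + j) (fun w => (w - z) ^ j • g w) = taylorCoeffAt z i g := by
  induction j generalizing i with
  | zero => simp
  | succ j ih =>
    have hgj : AnalyticAt ℂ (fun w => (w - z) ^ j • g w) z := by fun_prop
    simp_rw [pow_succ', mul_smul]
    rw [← add_assoc, hgj.taylorCoeffAt_sub_smul_succ, ih]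

theorem AnalyticAt.taylorCoeffAt_pow_sub_smul_of_lt [CompleteSpace E] (hg : AnalyticAt ℂ g z)
    {i m : ℕ} (hi : i < m) : taylorCoeffAt z i (fun w => (w - z) ^ m • g w) = 0 := by
  have hf : AnalyticAt ℂ (fun w => (w - z) ^ m • g w) z := by fun_prop
  have hm : (m : ℕ∞) ≤ analyticOrderAt (fun w => (w - z) ^ m • g w) z :=
    (natCast_le_analyticOrderAt hf).2 ⟨g, hg, .of_forall fun _ => rfl⟩
  rw [taylorCoeffAt, (natCast_le_analyticOrderAt_iff_iteratedDeriv_eq_zero hf).1 hm i hi,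
    smul_zero]

theorem AnalyticAt.dslope_self {f : ℂ → E} {a : ℂ} (hf : AnalyticAt ℂ f a) :
    AnalyticAt ℂ (dslope f a) a := by
  obtain ⟨p, hp⟩ := hf
  exact ⟨_, hp.has_fpower_series_dslope_fslope⟩

theorem AnalyticOnNhd.dslope {s : Set ℂ} {f : ℂ → E} (hf : AnalyticOnNhd ℂ f s) (a : ℂ) :
    AnalyticOnNhd ℂ (dslope f a) s := by
  intro b hb
  rcases eq_or_ne b a with rfl | hba
  · exact (hf b hb).dslope_self
  · have hslope : AnalyticAt ℂ (fun w => (w - a)⁻¹ • (f w - f a)) b :=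
      ((analyticAt_id.sub analyticAt_const).inv (sub_ne_zero.2 hba)).smul
        ((hf b hb).sub analyticAt_const)
    refine hslope.congr ?_
    filter_upwards [dslope_eventuallyEq_slope_of_ne f hba] with w hw
    rw [hw, slope_def_module]

theorem AnalyticAt.taylorCoeffAt_pow_smul_of_lt [CompleteSpace E] {φ : ℂ → ℂ}
    (hφ : AnalyticAt ℂ φ z) (hφz : φ z = 0) (hg : AnalyticAt ℂ g z) {i m : ℕ} (hi : i < m) :
    taylorCoeffAt z i (fun w => φ w ^ m • g w) = 0 := by
  have hφ_eq : (fun w => φ w ^ m • g w) = fun w => (w - z) ^ m • (dslope φ z w ^ m • g w) := by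
    funext w
    rw [← sub_smul_dslope_of_zero hφz w, smul_eq_mul, mul_pow, mul_smul]
  rw [hφ_eq]
  exact ((hφ.dslope_self.pow m).smul hg).taylorCoeffAt_pow_sub_smul_of_lt hi

end TaylorCoeffAt

section Mobius

def mobius (a w : ℂ) : ℂ := (w - a) / (1 - conj a * w)

variable {a w : ℂ}

theorem one_sub_conj_mul_ne_zero (ha : ‖a‖ < 1) (hw : ‖w‖ < 1) : 1 - conj a * w ≠ 0 := by
  refine sub_ne_zero.2 fun h => ?_
  have h1 : ‖a‖ * ‖w‖ = 1 := by simpa using congrArg norm h.symm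
  nlinarith [norm_nonneg a, norm_nonneg w]

theorem analyticAt_mobius (ha : ‖a‖ < 1) (hw : ‖w‖ < 1) : AnalyticAt ℂ (mobius a) w :=
  (analyticAt_id.sub analyticAt_const).div
    (analyticAt_const.sub (analyticAt_const.mul analyticAt_id)) (one_sub_conj_mul_ne_zero ha hw)

theorem norm_mobius_lt_one (ha : ‖a‖ < 1) (hw : ‖w‖ < 1) : ‖mobius a w‖ < 1 := by
  have hden := one_sub_conj_mul_ne_zero ha hw
  rw [mobius, norm_div, div_lt_one (norm_pos_iff.2 hden)]
  refine lt_of_pow_lt_pow_left₀ 2 (norm_nonneg _) ?_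
  have key : Complex.normSq (1 - conj a * w) - Complex.normSq (w - a)
      = (1 - Complex.normSq a) * (1 - Complex.normSq w) := by
    simp only [Complex.normSq_apply, Complex.sub_re, Complex.sub_im, Complex.mul_re,
      Complex.mul_im, Complex.one_re, Complex.one_im, Complex.conj_re, Complex.conj_im]
    ring
  rw [Complex.sq_norm, Complex.sq_norm]
  have ha2 : Complex.normSq a < 1 := by rw [← Complex.sq_norm]; nlinarith [norm_nonneg a]
  have hw2 : Complex.normSq w < 1 := by rw [← Complex.sq_norm]; nlinarith [norm_nonneg w]
  nlinarith

theorem mobius_neg_mobius (ha : ‖a‖ < 1) (hw : ‖w‖ < 1) : mobius (-a) (mobius a w) = w := by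
  have hD := one_sub_conj_mul_ne_zero ha hw
  have haa := one_sub_conj_mul_ne_zero ha ha
  have hE : 1 - conj (-a) * mobius a w = (1 - conj a * a) / (1 - conj a * w) := by
    rw [mobius, map_neg, eq_div_iff hD]
    field_simp
    ring
  rw [mobius, hE, div_eq_iff (div_ne_zero haa hD), mobius, sub_neg_eq_add, div_add' _ _ _ hD,
    mul_div_assoc', div_left_inj' hD]
  ring

end Mobius

namespace IsConfEquiv

variable {ψ : ℂ → ℂ} {z w : ℂ}

theorem analyticOnNhd (hψ : IsConfEquiv U ψ) : AnalyticOnNhd ℂ ψ U := by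
  obtain ⟨_, h, -⟩ := hψ
  exact h

theorem mobius_comp (hψ : IsConfEquiv U ψ) {a : ℂ} (ha : ‖a‖ < 1) :
    IsConfEquiv U (fun w => mobius a (ψ w)) := by
  obtain ⟨ψi, hψa, hψm, hψia, hψim, hleft, hright⟩ := hψ
  have ha' : ‖-a‖ < 1 := by rwa [norm_neg]
  have hψm' : ∀ w ∈ U, ‖ψ w‖ < 1 := fun w hw => mem_ball_zero_iff.1 (hψm hw)
  refine ⟨fun v => ψi (mobius (-a) v),
    fun w hw => (analyticAt_mobius ha (hψm' w hw)).comp (hψa w hw),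
    fun w hw => mem_ball_zero_iff.2 (norm_mobius_lt_one ha (hψm' w hw)), fun v hv => ?_,
    fun v hv => hψim (mem_ball_zero_iff.2 (norm_mobius_lt_one ha' (mem_ball_zero_iff.1 hv))),
    fun w hw => by simp only [mobius_neg_mobius ha (hψm' w hw), hleft w hw], fun v hv => ?_⟩
  · rw [mem_ball_zero_iff] at hv
    exact (hψia _ (mem_ball_zero_iff.2 (norm_mobius_lt_one ha' hv))).comp
      (analyticAt_mobius ha' hv)
  · rw [mem_ball_zero_iff] at hv
    dsimp only
    rw [hright _ (mem_ball_zero_iff.2 (norm_mobius_lt_one ha' hv))]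
    simpa using mobius_neg_mobius ha' hv

theorem exists_apply_eq_zero (hψ : IsConfEquiv U ψ) (hz : z ∈ U) :
    ∃ φ, IsConfEquiv U φ ∧ φ z = 0 := by
  have hψz : ‖ψ z‖ < 1 := by
    obtain ⟨_, -, hψm, -⟩ := hψ
    exact mem_ball_zero_iff.1 (hψm hz)
  exact ⟨_, hψ.mobius_comp hψz, by simp [mobius]⟩

theorem dslope_ne_zero (hU : IsOpen U) (hψ : IsConfEquiv U ψ) (hz : z ∈ U) (hw : w ∈ U) :
    dslope ψ z w ≠ 0 := by
  obtain ⟨ψi, hψa, hψm, hψia, -, hleft, -⟩ := hψ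
  rcases eq_or_ne w z with rfl | hwz
  · have hid : ψi ∘ ψ =ᶠ[𝓝 w] id := Filter.eventually_of_mem (hU.mem_nhds hw) hleft
    have hderiv := hid.deriv_eq
    rw [deriv_id, deriv_comp w (hψia _ (hψm hw)).differentiableAt (hψa w hw).differentiableAt]
      at hderiv
    rw [dslope_same]
    exact right_ne_zero_of_mul (hderiv ▸ one_ne_zero)
  · rw [dslope_of_ne ψ hwz, slope_def_field]
    refine div_ne_zero (sub_ne_zero.2 fun h => hwz ?_) (sub_ne_zero.2 hwz)
    rw [← hleft w hw, ← hleft z hz, h]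

end IsConfEquiv

section PowerExpansion

variable {s : Set ℂ} {φ h : ℂ → ℂ} {z : ℂ}

theorem exists_eq_add_mul_of_dslope_ne_zero (hφ : AnalyticOnNhd ℂ φ s) (hφz : φ z = 0)
    (hφ' : ∀ w ∈ s, dslope φ z w ≠ 0) (hh : AnalyticOnNhd ℂ h s) :
    ∃ g, AnalyticOnNhd ℂ g s ∧ ∀ w ∈ s, h w = h z + φ w * g w := by
  refine ⟨fun w => dslope h z w / dslope φ z w,
    fun w hw => (hh.dslope z w hw).div (hφ.dslope z w hw) (hφ' w hw), fun w hw => ?_⟩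
  have hsub := sub_smul_dslope h z w
  rw [← sub_smul_dslope_of_zero hφz w]
  simp only [smul_eq_mul] at hsub ⊢
  field_simp [hφ' w hw]
  linear_combination -hsub

theorem exists_eq_sum_pow_add_pow_mul (hφ : AnalyticOnNhd ℂ φ s) (hφz : φ z = 0)
    (hφ' : ∀ w ∈ s, dslope φ z w ≠ 0) (m : ℕ) (hh : AnalyticOnNhd ℂ h s) :
    ∃ (c : ℕ → ℂ) (g : ℂ → ℂ), AnalyticOnNhd ℂ g s ∧
      ∀ w ∈ s, h w = ∑ i ∈ Finset.range m, c i * φ w ^ i + φ w ^ m * g w := by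
  induction m generalizing h with
  | zero => exact ⟨0, h, hh, by simp⟩
  | succ m ih =>
    obtain ⟨h₁, hh₁, hdec₁⟩ := exists_eq_add_mul_of_dslope_ne_zero hφ hφz hφ' hh
    obtain ⟨c, g, hg, hdec⟩ := ih hh₁
    refine ⟨fun i => if i = 0 then h z else c (i - 1), g, hg, fun w hw => ?_⟩
    rw [hdec₁ w hw, hdec w hw, Finset.sum_range_succ']
    simp only [Nat.add_one_ne_zero, if_false, Nat.add_sub_cancel, if_true, pow_zero, mul_one]
    rw [mul_add, Finset.mul_sum, Finset.sum_congr rfl fun i _ =>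
      show φ w * (c i * φ w ^ i) = c i * φ w ^ (i + 1) by ring]
    ring

end PowerExpansion

section Shifts

variable {E : Type*} [NormedAddCommGroup E] {n m k : ℕ}

theorem leftShift_add (x y : Fin n → E) :
    leftShift E n m (x + y) = leftShift E n m x + leftShift E n m y := by
  funext i
  simp only [leftShift, Pi.add_apply]
  split_ifs <;> simp

theorem leftShift_smul {R : Type*} [SMulZeroClass R E] (c : R) (x : Fin n → E) :
    leftShift E n m (c • x) = c • leftShift E n m x := by
  funext i
  simp only [leftShift, Pi.smul_apply]
  split_ifs <;> simp

theorem rightProj_add (h : m ≤ n) (x y : Fin n → E) :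
    rightProj E n m h (x + y) = rightProj E n m h x + rightProj E n m h y := rfl

theorem rightProj_smul {R : Type*} [SMul R E] (h : m ≤ n) (c : R) (x : Fin n → E) :
    rightProj E n m h (c • x) = c • rightProj E n m h x := rfl

theorem leftShift_leftShift {l : ℕ} (hnm : n ≤ m) (hml : m ≤ l) (x : Fin n → E) :
    leftShift E m l (leftShift E n m x) = leftShift E n l x := by
  funext i
  simp only [leftShift]
  split_ifs <;> first | omega | rfl | (congr 1; ext; simp; omega)

theorem rightProj_leftShift (hmn : m ≤ n) (x : Fin n → E) :
    rightProj E (n + k) (m + k) (Nat.add_le_add_right hmn k) (leftShift E n (n + k) x) =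
      leftShift E m (m + k) (rightProj E n m hmn x) := by
  funext i
  simp only [rightProj, leftShift, Fin.val_castLE]
  split_ifs <;> first | omega | rfl | (congr 1; ext; simp)

theorem leftShift_drop {x : Fin (m + k) → E} (h0 : ∀ i : Fin (m + k), (i : ℕ) < k → x i = 0) :
    leftShift E m (m + k) (fun i => x (i.addNat k)) = x := by
  funext i
  simp only [leftShift]
  split_ifs with hi
  · congr 1; ext; simp; omega
  · exact (h0 i (by omega)).symm

end Shifts

namespace AdmissibleSpace

variable (A : AdmissibleSpace U W 𝓕) {z : ℂ}

theorem exists_pow_smul {φ : ℂ → ℂ} (hφ : IsConfEquiv U φ) (j : ℕ) (F : 𝓕) :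
    ∃ G : 𝓕, (∀ w ∈ U, A.toFun G w = φ w ^ j • A.toFun F w) ∧ ‖G‖ = ‖F‖ := by
  induction j with
  | zero => exact ⟨F, fun w _ => by simp, rfl⟩
  | succ j ih =>
    obtain ⟨G, hG, hGn⟩ := ih
    obtain ⟨H, hH, hHn⟩ := A.smul_mem φ hφ G
    exact ⟨H, fun w hw => by rw [hH w hw, hG w hw, smul_smul, pow_succ'], hHn.trans hGn⟩

theorem exists_sum_pow_smul {φ : ℂ → ℂ} (hφ : IsConfEquiv U φ) (c : ℕ → ℂ) (m : ℕ) (F : 𝓕) :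
    ∃ G : 𝓕, (∀ w ∈ U, A.toFun G w = (∑ i ∈ Finset.range m, c i * φ w ^ i) • A.toFun F w) ∧
      ‖G‖ ≤ (∑ i ∈ Finset.range m, ‖c i‖) * ‖F‖ := by
  induction m with
  | zero => exact ⟨0, fun w _ => by simp, by simp⟩
  | succ m ih =>
    obtain ⟨G, hG, hGn⟩ := ih
    obtain ⟨H, hH, hHn⟩ := A.exists_pow_smul hφ m F
    refine ⟨G + c m • H, fun w hw => ?_, ?_⟩
    · rw [map_add, map_smul, Pi.add_apply, Pi.smul_apply, hG w hw, hH w hw,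
        Finset.sum_range_succ, add_smul, smul_smul]
    · calc ‖G + c m • H‖ ≤ ‖G‖ + ‖c m‖ * ‖H‖ := (norm_add_le _ _).trans_eq (by rw [norm_smul])
        _ ≤ _ := by rw [Finset.sum_range_succ, add_mul, hHn]; gcongr

theorem exists_taylorCoeff_eq_mul (hz : z ∈ U) {h : ℂ → ℂ} (hh : AnalyticOnNhd ℂ h U) (m : ℕ) :
    ∃ C, ∀ F : 𝓕, ∃ G : 𝓕, ‖G‖ ≤ C * ‖F‖ ∧
      ∀ i < m, taylorCoeff A z i G = taylorCoeffAt z i (fun w => h w • A.toFun F w) := by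
  obtain ⟨ψ, hψ⟩ := A.conf
  obtain ⟨φ, hφ, hφz⟩ := hψ.exists_apply_eq_zero hz
  obtain ⟨c, g, hg, hdec⟩ := exists_eq_sum_pow_add_pow_mul hφ.analyticOnNhd hφz
    (fun w hw => hφ.dslope_ne_zero A.isOpen_U hz hw) m hh
  refine ⟨∑ i ∈ Finset.range m, ‖c i‖, fun F => ?_⟩
  obtain ⟨G, hG, hGn⟩ := A.exists_sum_pow_smul hφ c m F
  refine ⟨G, hGn, fun i hi => ?_⟩
  have hrem : AnalyticAt ℂ (fun w => g w • A.toFun F w) z := (hg z hz).smul (A.analyticOn F z hz)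
  have heq : (fun w => h w • A.toFun F w)
      =ᶠ[𝓝 z] A.toFun G + fun w => φ w ^ m • g w • A.toFun F w := by
    filter_upwards [A.isOpen_U.mem_nhds hz] with w hw
    rw [Pi.add_apply, hG w hw, hdec w hw, add_smul, mul_smul]
  have hφrem : AnalyticAt ℂ (fun w => φ w ^ m • g w • A.toFun F w) z :=
    ((hφ.analyticOnNhd z hz).pow m).smul hrem
  rw [heq.taylorCoeffAt_eq, (A.analyticOn G z hz).taylorCoeffAt_add hφrem,
    (hφ.analyticOnNhd z hz).taylorCoeffAt_pow_smul_of_lt hφz hrem hi, add_zero]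
  rfl

theorem exists_taylorCoeff_eq_succ (hz : z ∈ U) (m : ℕ) {F : 𝓕} (hF : taylorCoeff A z 0 F = 0) :
    ∃ H : 𝓕, ∀ i < m, taylorCoeff A z i H = taylorCoeff A z (i + 1) F := by
  obtain ⟨ψ, hψ⟩ := A.conf
  obtain ⟨φ, hφ, hφz⟩ := hψ.exists_apply_eq_zero hz
  have hu : AnalyticOnNhd ℂ (dslope φ z) U := hφ.analyticOnNhd.dslope z
  have hu0 : ∀ w ∈ U, dslope φ z w ≠ 0 := fun w hw => hφ.dslope_ne_zero A.isOpen_U hz hw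
  set f := A.toFun F
  have hfz : f z = 0 := (taylorCoeffAt_zero z f).symm.trans hF
  have hd : AnalyticOnNhd ℂ (dslope f z) U := (A.analyticOn F).dslope z
  obtain ⟨G, hG, -⟩ := A.mem_of_smul φ hφ F (fun w => (dslope φ z w)⁻¹ • dslope f z w)
    (fun w hw => ((hu w hw).inv (hu0 w hw)).smul (hd w hw)) fun w hw => by
      rw [smul_smul, ← sub_smul_dslope_of_zero hφz w, smul_eq_mul, mul_assoc,
        mul_inv_cancel₀ (hu0 w hw), mul_one, sub_smul_dslope_of_zero hfz]
  obtain ⟨_, hC⟩ := A.exists_taylorCoeff_eq_mul hz hu m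
  obtain ⟨H, -, hH⟩ := hC G
  refine ⟨H, fun i hi => ?_⟩
  have heq : (fun w => dslope φ z w • A.toFun G w) =ᶠ[𝓝 z] dslope f z := by
    filter_upwards [A.isOpen_U.mem_nhds hz] with w hw
    rw [hG w hw, smul_smul, mul_inv_cancel₀ (hu0 w hw), one_smul]
  rw [hH i hi, heq.taylorCoeffAt_eq, ← (hd z hz).taylorCoeffAt_sub_smul_succ]
  simp only [sub_smul_dslope_of_zero hfz]
  rfl

theorem exists_taylorCoeff_eq_add (hz : z ∈ U) (k m : ℕ) {F : 𝓕}
    (hF : ∀ i < k, taylorCoeff A z i F = 0) :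
    ∃ H : 𝓕, ∀ i < m, taylorCoeff A z i H = taylorCoeff A z (i + k) F := by
  induction k generalizing m F with
  | zero => exact ⟨F, fun i _ => rfl⟩
  | succ k ih =>
    obtain ⟨H₁, hH₁⟩ := A.exists_taylorCoeff_eq_succ hz (m + k) (hF 0 (by omega))
    obtain ⟨H, hH⟩ := ih m fun i hi => by rw [hH₁ i (by omega)]; exact hF _ (by omega)
    exact ⟨H, fun i hi => by rw [hH i hi, hH₁ _ (by omega), add_assoc]⟩

def taylorCoeffs (z : ℂ) (n : ℕ) (F : 𝓕) : Fin n → W := fun i => taylorCoeff A z i F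

theorem exists_taylorCoeffs_eq_leftShift (hz : z ∈ U) {n m : ℕ} (hnm : n ≤ m) :
    ∃ C, ∀ F : 𝓕, ∃ G : 𝓕, ‖G‖ ≤ C * ‖F‖ ∧
      A.taylorCoeffs z m G = leftShift W n m (A.taylorCoeffs z n F) := by
  obtain ⟨C, hC⟩ := A.exists_taylorCoeff_eq_mul hz (h := fun w => (w - z) ^ (m - n))
    (fun w _ => by fun_prop) m
  refine ⟨C, fun F => ?_⟩
  obtain ⟨G, hGn, hG⟩ := hC F
  refine ⟨G, hGn, funext fun i => ?_⟩
  have hF := A.analyticOn F z hz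
  simp only [taylorCoeffs, hG i i.isLt, leftShift]
  split_ifs with hi
  · have := hF.taylorCoeffAt_pow_sub_smul_add (m - n) (i - (m - n))
    rwa [Nat.sub_add_cancel hi.1] at this
  · exact hF.taylorCoeffAt_pow_sub_smul_of_lt (by omega)

theorem mem_Zset_iff {n : ℕ} {x : Fin n → W} :
    x ∈ Zset A z n ↔ ∃ F, A.taylorCoeffs z n F = x := by
  simp only [Zset, taylorCoeffs, funext_iff, Set.mem_ofPred_eq]

theorem taylorCoeffs_mem_Zset (n : ℕ) (F : 𝓕) : A.taylorCoeffs z n F ∈ Zset A z n :=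
  A.mem_Zset_iff.2 ⟨F, rfl⟩

theorem taylorCoeffs_add (hz : z ∈ U) (n : ℕ) (F G : 𝓕) :
    A.taylorCoeffs z n (F + G) = A.taylorCoeffs z n F + A.taylorCoeffs z n G := by
  funext i
  simp only [taylorCoeffs, taylorCoeff, map_add, Pi.add_apply]
  exact (A.analyticOn F z hz).taylorCoeffAt_add (A.analyticOn G z hz) i

theorem taylorCoeffs_smul (c : ℂ) (n : ℕ) (F : 𝓕) :
    A.taylorCoeffs z n (c • F) = c • A.taylorCoeffs z n F := by
  funext i
  simp only [taylorCoeffs, taylorCoeff, map_smul, Pi.smul_apply]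
  exact taylorCoeffAt_smul c (A.toFun F) i

theorem taylorCoeffs_sub (hz : z ∈ U) (n : ℕ) (F G : 𝓕) :
    A.taylorCoeffs z n (F - G) = A.taylorCoeffs z n F - A.taylorCoeffs z n G := by
  rw [sub_eq_add_neg, ← neg_one_smul ℂ G, A.taylorCoeffs_add hz, A.taylorCoeffs_smul, neg_one_smul,
    ← sub_eq_add_neg]

variable {n : ℕ} {x y : Fin n → W}

theorem add_mem_Zset (hz : z ∈ U) (hx : x ∈ Zset A z n) (hy : y ∈ Zset A z n) :
    x + y ∈ Zset A z n := by
  obtain ⟨F, rfl⟩ := A.mem_Zset_iff.1 hx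
  obtain ⟨G, rfl⟩ := A.mem_Zset_iff.1 hy
  exact A.mem_Zset_iff.2 ⟨F + G, A.taylorCoeffs_add hz n F G⟩

theorem sub_mem_Zset (hz : z ∈ U) (hx : x ∈ Zset A z n) (hy : y ∈ Zset A z n) :
    x - y ∈ Zset A z n := by
  obtain ⟨F, rfl⟩ := A.mem_Zset_iff.1 hx
  obtain ⟨G, rfl⟩ := A.mem_Zset_iff.1 hy
  exact A.mem_Zset_iff.2 ⟨F - G, A.taylorCoeffs_sub hz n F G⟩

theorem smul_mem_Zset (c : ℂ) (hx : x ∈ Zset A z n) : c • x ∈ Zset A z n := by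
  obtain ⟨F, rfl⟩ := A.mem_Zset_iff.1 hx
  exact A.mem_Zset_iff.2 ⟨c • F, A.taylorCoeffs_smul c n F⟩

theorem rightProj_mem_Zset {m : ℕ} (hmn : m ≤ n) (hx : x ∈ Zset A z n) :
    rightProj W n m hmn x ∈ Zset A z m := by
  obtain ⟨F, rfl⟩ := A.mem_Zset_iff.1 hx
  exact A.taylorCoeffs_mem_Zset m F

theorem exists_rightProj_eq {m : ℕ} (hmn : m ≤ n) {v : Fin m → W} (hv : v ∈ Zset A z m) :
    ∃ x, x ∈ Zset A z n ∧ rightProj W n m hmn x = v := by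
  obtain ⟨F, rfl⟩ := A.mem_Zset_iff.1 hv
  exact ⟨_, A.taylorCoeffs_mem_Zset n F, rfl⟩

theorem Znorm_nonneg (x : Fin n → W) : 0 ≤ Znorm A z n x :=
  Real.sInf_nonneg (by rintro _ ⟨F, -, rfl⟩; exact norm_nonneg F)

theorem Znorm_taylorCoeffs_le (n : ℕ) (F : 𝓕) : Znorm A z n (A.taylorCoeffs z n F) ≤ ‖F‖ :=
  csInf_le ⟨0, by rintro _ ⟨G, -, rfl⟩; exact norm_nonneg G⟩ ⟨F, fun _ => rfl, rfl⟩

theorem Znorm_le_mul_of_forall {m : ℕ} {y : Fin m → W} {C : ℝ} (hx : x ∈ Zset A z n)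
    (h : ∀ F, A.taylorCoeffs z n F = x → Znorm A z m y ≤ C * ‖F‖) :
    Znorm A z m y ≤ C * Znorm A z n x := by
  obtain ⟨F₀, hF₀⟩ := A.mem_Zset_iff.1 hx
  rcases le_or_gt C 0 with hC | hC
  · calc Znorm A z m y ≤ C * ‖F₀‖ := h F₀ hF₀
      _ ≤ C * Znorm A z n x :=
        mul_le_mul_of_nonpos_left (hF₀ ▸ A.Znorm_taylorCoeffs_le n F₀) hC
  · rw [← div_le_iff₀' hC]
    refine le_csInf ⟨_, F₀, fun i => congrFun hF₀ i, rfl⟩ ?_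
    rintro _ ⟨F, hF, rfl⟩
    rw [div_le_iff₀' hC]
    exact h F (funext hF)

theorem Znorm_rightProj_le {m : ℕ} (hmn : m ≤ n) (hx : x ∈ Zset A z n) :
    Znorm A z m (rightProj W n m hmn x) ≤ Znorm A z n x := by
  simpa using A.Znorm_le_mul_of_forall (C := 1) hx fun F hF => by
    rw [one_mul, ← hF]
    exact A.Znorm_taylorCoeffs_le m F

theorem exists_Znorm_leftShift_le (hz : z ∈ U) {m : ℕ} (hnm : n ≤ m) :
    ∃ C, ∀ x ∈ Zset A z n,
      leftShift W n m x ∈ Zset A z m ∧ Znorm A z m (leftShift W n m x) ≤ C * Znorm A z n x := by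
  obtain ⟨C, hC⟩ := A.exists_taylorCoeffs_eq_leftShift hz hnm
  refine ⟨C, fun x hx => ⟨?_, A.Znorm_le_mul_of_forall hx fun F hF => ?_⟩⟩
  · obtain ⟨F, rfl⟩ := A.mem_Zset_iff.1 hx
    obtain ⟨G, -, hG⟩ := hC F
    exact hG ▸ A.taylorCoeffs_mem_Zset m G
  · obtain ⟨G, hGn, hG⟩ := hC F
    rw [← hF, ← hG]
    exact (A.Znorm_taylorCoeffs_le m G).trans hGn

theorem drop_mem_Zset (hz : z ∈ U) {m k : ℕ} {x : Fin (m + k) → W} (hx : x ∈ Zset A z (m + k))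
    (h0 : ∀ i : Fin (m + k), (i : ℕ) < k → x i = 0) :
    (fun i : Fin m => x (i.addNat k)) ∈ Zset A z m := by
  obtain ⟨F, rfl⟩ := A.mem_Zset_iff.1 hx
  obtain ⟨H, hH⟩ := A.exists_taylorCoeff_eq_add hz k m fun i hi => h0 ⟨i, by omega⟩ hi
  exact A.mem_Zset_iff.2 ⟨H, funext fun i => hH i i.isLt⟩

end AdmissibleSpace

namespace AdmissibleSpace.IsSplittingProjection

variable {A : AdmissibleSpace U W 𝓕} {z : ℂ} {n k : ℕ} {P : (Fin (n + k) → W) → Fin n → W}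

theorem exists_nonneg_bound (hP : A.IsSplittingProjection z n k P) :
    ∃ C, 0 ≤ C ∧ ∀ x ∈ Zset A z (n + k), Znorm A z n (P x) ≤ C * Znorm A z (n + k) x := by
  obtain ⟨C, hC⟩ := hP.2.2.2.1
  exact ⟨max C 0, le_max_right C 0, fun x hx => (hC x hx).trans
    (mul_le_mul_of_nonneg_right (le_max_left C 0) (A.Znorm_nonneg x))⟩

theorem comp_leftShift (hz : z ∈ U) (hP : A.IsSplittingProjection z n k P) {j : ℕ} (hjk : j ≤ k) :
    A.IsSplittingProjection z n j (fun x => P (leftShift W (n + j) (n + k) x)) := by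
  obtain ⟨C, hC0, hC⟩ := hP.exists_nonneg_bound
  obtain ⟨hmem, hadd, hsmul, -, hid⟩ := hP
  obtain ⟨S, hS⟩ := A.exists_Znorm_leftShift_le hz (Nat.add_le_add_left hjk n)
  refine ⟨fun x hx => hmem _ (hS x hx).1, fun x hx y hy => ?_, fun c x hx => ?_,
    ⟨C * S, fun x hx => ?_⟩, fun x hx => ?_⟩
  · dsimp only
    rw [leftShift_add]
    exact hadd _ (hS x hx).1 _ (hS y hy).1
  · dsimp only
    rw [leftShift_smul]
    exact hsmul c _ (hS x hx).1
  · calc Znorm A z n (P (leftShift W (n + j) (n + k) x))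
        ≤ C * Znorm A z (n + k) (leftShift W (n + j) (n + k) x) := hC _ (hS x hx).1
      _ ≤ C * (S * Znorm A z (n + j) x) := mul_le_mul_of_nonneg_left (hS x hx).2 hC0
      _ = C * S * Znorm A z (n + j) x := (mul_assoc C S _).symm
  · dsimp only
    rw [leftShift_leftShift (by omega) (by omega)]
    exact hid x hx

theorem rightProj_eq_of_rightProj_eq (hz : z ∈ U) (hP : A.IsSplittingProjection z n k P) {m : ℕ}
    (hmn : m ≤ n) {x x' : Fin (n + k) → W} (hx : x ∈ Zset A z (n + k))
    (hx' : x' ∈ Zset A z (n + k))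
    (h : rightProj W (n + k) (m + k) (Nat.add_le_add_right hmn k) x =
      rightProj W (n + k) (m + k) (Nat.add_le_add_right hmn k) x') :
    rightProj W n m hmn (P x) = rightProj W n m hmn (P x') := by
  obtain ⟨-, hadd, -, -, hid⟩ := hP
  have hd : x - x' ∈ Zset A z (n + k) := A.sub_mem_Zset hz hx hx'
  have hd0 : ∀ i : Fin (n + k), (i : ℕ) < m + k → (x - x') i = 0 := fun i hi => by
    simpa [rightProj, sub_eq_zero] using congrFun h ⟨i, hi⟩
  have hPd : P (x - x') = fun i => (x - x') (i.addNat k) := by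
    conv_lhs => rw [← leftShift_drop fun i hi => hd0 i (by omega)]
    exact hid _ (A.drop_mem_Zset hz hd fun i hi => hd0 i (by omega))
  have hPx : P x = P x' + P (x - x') := by
    rw [← hadd _ hx' _ hd, add_sub_cancel]
  funext i
  simp only [rightProj, hPx, hPd, Pi.add_apply, add_eq_left]
  exact hd0 _ (by simp)

theorem exists_of_le (hz : z ∈ U) (hP : A.IsSplittingProjection z n k P) {m : ℕ} (hmn : m ≤ n) :
    ∃ Q, A.IsSplittingProjection z m k Q := by
  have hmk := Nat.add_le_add_right hmn k
  choose! lift hlift using fun v (hv : v ∈ Zset A z (m + k)) => A.exists_rightProj_eq hmk hv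
  set Q := fun v => rightProj W n m hmn (P (lift v))
  have hQ : ∀ x ∈ Zset A z (n + k), Q (rightProj W _ _ hmk x) = rightProj W n m hmn (P x) :=
    fun x hx => hP.rightProj_eq_of_rightProj_eq hz hmn (hlift _ (A.rightProj_mem_Zset hmk hx)).1
      hx (hlift _ (A.rightProj_mem_Zset hmk hx)).2
  obtain ⟨C, hC0, hC⟩ := hP.exists_nonneg_bound
  obtain ⟨hmem, hadd, hsmul, -, hid⟩ := hP
  obtain ⟨S, hS⟩ := A.exists_Znorm_leftShift_le hz (Nat.le_add_right n k)
  refine ⟨Q, fun v hv => A.rightProj_mem_Zset hmn (hmem _ (hlift v hv).1), fun v hv v' hv' => ?_,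
    fun c v hv => ?_, ⟨C, fun v hv => A.Znorm_le_mul_of_forall hv fun F hF => ?_⟩, fun y hy => ?_⟩
  · obtain ⟨hx, hxv⟩ := hlift v hv
    obtain ⟨hx', hxv'⟩ := hlift v' hv'
    calc Q (v + v') = Q (rightProj W _ _ hmk (lift v + lift v')) := by
          rw [rightProj_add, hxv, hxv']
      _ = Q v + Q v' := by rw [hQ _ (A.add_mem_Zset hz hx hx'), hadd _ hx _ hx']; rfl
  · obtain ⟨hx, hxv⟩ := hlift v hv
    calc Q (c • v) = Q (rightProj W _ _ hmk (c • lift v)) := by rw [rightProj_smul, hxv]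
      _ = c • Q v := by rw [hQ _ (A.smul_mem_Zset c hx), hsmul _ _ hx]; rfl
  · have hx := A.taylorCoeffs_mem_Zset (z := z) (n + k) F
    rw [← hF]
    calc Znorm A z m (Q (rightProj W _ _ hmk (A.taylorCoeffs z (n + k) F)))
        = Znorm A z m (rightProj W n m hmn (P (A.taylorCoeffs z (n + k) F))) := by rw [hQ _ hx]
      _ ≤ Znorm A z n (P (A.taylorCoeffs z (n + k) F)) := A.Znorm_rightProj_le hmn (hmem _ hx)
      _ ≤ C * Znorm A z (n + k) (A.taylorCoeffs z (n + k) F) := hC _ hx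
      _ ≤ C * ‖F‖ := mul_le_mul_of_nonneg_left (A.Znorm_taylorCoeffs_le _ F) hC0
  · obtain ⟨G, rfl⟩ := A.mem_Zset_iff.1 hy
    have he := A.taylorCoeffs_mem_Zset (z := z) n G
    calc Q (leftShift W m (m + k) (A.taylorCoeffs z m G))
        = Q (rightProj W _ _ hmk (leftShift W n (n + k) (A.taylorCoeffs z n G))) := by
          rw [rightProj_leftShift hmn]; rfl
      _ = A.taylorCoeffs z m G := by rw [hQ _ (hS _ he).1, hid _ he]; rfl

end AdmissibleSpace.IsSplittingProjection

/-- **Nontriviality propagates from the seed case `n = k = 1`.**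
If there is no bounded linear operator `P : Z^(2) → Z^(1)` with `P ∘ ι_{1,2} = id` (i.e.
the sequence `0 → Z^(1) → Z^(2) → Z^(1) → 0` is nontrivial), then for all `n, k ≥ 1`
there is no bounded linear operator `P : Z^(n+k) → Z^(n)` with `P ∘ ι_{n,n+k} = id`
(i.e. `0 → Z^(n) → Z^(n+k) → Z^(k) → 0` is nontrivial). -/
theorem AdmissibleSpace.nontrivial_of_nontrivial_seed (A : AdmissibleSpace U W 𝓕) (z : ℂ)
    (hz : z ∈ U)
    (h1 : ¬∃ P : (Fin (1 + 1) → W) → Fin 1 → W, A.IsSplittingProjection z 1 1 P) :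
    ∀ n k : ℕ, 1 ≤ n → 1 ≤ k →
      ¬∃ P : (Fin (n + k) → W) → Fin n → W, A.IsSplittingProjection z n k P := by
  rintro n k hn hk ⟨P, hP⟩
  obtain ⟨Q, hQ⟩ := hP.exists_of_le hz hn
  exact h1 ⟨_, hQ.comp_leftShift hz hk⟩

end
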